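/- arXiv:2305.10380 — 2 statements merged into one kernel-verified Lean document; each statement's English description precedes it below -/
import Mathlib

section
/- In the Erdős–Rényi model G(n,p), the expected degree variance satisfies E[V_n] = n^{-1}(n-1)(n-2) p(1-p), where V_n = n^{-1} Σ_i (D_i - D̄_n)^2, D_i is the degree of vertex i and D̄_n is the average degree. -/
open MeasureTheory ProbabilityTheory Finset

section AuxSums

lemma sum_chi (n : ℕ) (i : Fin n) :
    (∑ j : Fin n, if i = j then (0:ℝ) else 1) = (n:ℝ) - 1 := by
  have h : ∀ j : Fin n, (if i = j then (0:ℝ) else 1) = 1 - (if i = j then 1 else 0) := by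
    intro j; split_ifs <;> ring
  simp_rw [h]
  rw [Finset.sum_sub_distrib, Finset.sum_const, Finset.card_univ, Fintype.card_fin,
    Finset.sum_ite_eq]
  simp

lemma sum_chi2 (n : ℕ) :
    ∑ k : Fin n, ∑ l : Fin n, (if k = l then (0:ℝ) else 1) = (n:ℝ)*((n:ℝ)-1) := by
  simp_rw [sum_chi]
  rw [Finset.sum_const, Finset.card_univ, Fintype.card_fin, nsmul_eq_mul]

lemma sum_delta2 (n : ℕ) (c : ℝ) (a b : Fin n) :
    ∑ k : Fin n, ∑ l : Fin n, (if a = k ∧ b = l then c else 0) = c := by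
  simp [ite_and, Finset.sum_ite_eq]

lemma sum3 (n : ℕ) (p : ℝ) (i : Fin n) :
    (∑ j : Fin n, ∑ k : Fin n,
      (if i = j ∨ i = k then (0:ℝ)
        else if (i = i ∧ j = k) ∨ (i = k ∧ j = i) then p else p^2))
    = ((n:ℝ)-1)*((n:ℝ)-1)*p^2 + ((n:ℝ)-1)*(p - p^2) := by
  have h : ∀ j k : Fin n,
      (if i = j ∨ i = k then (0:ℝ)
        else if (i = i ∧ j = k) ∨ (i = k ∧ j = i) then p else p^2)
      = (if i = j then (0:ℝ) else 1) * ((if i = k then (0:ℝ) else 1) * p^2)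
        + (if i = j then (0:ℝ) else 1) * (if j = k then p - p^2 else 0) := by
    intro j k
    split_ifs <;> (first | ring1 | simp_all)
  have step : ∀ j : Fin n, (∑ k : Fin n,
      (if i = j ∨ i = k then (0:ℝ)
        else if (i = i ∧ j = k) ∨ (i = k ∧ j = i) then p else p^2))
      = (if i = j then (0:ℝ) else 1) * ((((n:ℝ)-1) * p^2) + (p - p^2)) := by
    intro j
    rw [Finset.sum_congr rfl fun k _ => h j k, Finset.sum_add_distrib,
      ← Finset.mul_sum, ← Finset.mul_sum, ← Finset.sum_mul, sum_chi, Finset.sum_ite_eq]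
    simp [mul_add]
  rw [Finset.sum_congr rfl fun j _ => step j, ← Finset.sum_mul, sum_chi]
  ring

lemma sum4 (n : ℕ) (p : ℝ) :
    (∑ i : Fin n, ∑ j : Fin n, ∑ k : Fin n, ∑ l : Fin n,
      (if i = j ∨ k = l then (0:ℝ)
        else if (i = k ∧ j = l) ∨ (i = l ∧ j = k) then p else p^2))
    = ((n:ℝ)*((n:ℝ)-1))^2 * p^2 + 2*((n:ℝ)*((n:ℝ)-1))*(p - p^2) := by
  have step1 : ∀ i j : Fin n, (∑ k : Fin n, ∑ l : Fin n,
      (if i = j ∨ k = l then (0:ℝ)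
        else if (i = k ∧ j = l) ∨ (i = l ∧ j = k) then p else p^2))
      = (if i = j then (0:ℝ) else 1) * (((n:ℝ)*((n:ℝ)-1))*p^2 + 2*(p - p^2)) := by
    intro i j
    have h : ∀ k l : Fin n,
        (if i = j ∨ k = l then (0:ℝ)
          else if (i = k ∧ j = l) ∨ (i = l ∧ j = k) then p else p^2)
        = (if i = j then (0:ℝ) else 1) *
            ((if k = l then (0:ℝ) else 1) * p^2
              + ((if i = k ∧ j = l then p - p^2 else 0) + (if j = k ∧ i = l then p - p^2 else 0))) := by
      intro k l
      split_ifs <;> (first | ring1 | simp_all)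
    rw [Finset.sum_congr rfl fun k _ => Finset.sum_congr rfl fun l _ => h k l]
    have pull : ∀ k : Fin n, (∑ l : Fin n,
        (if i = j then (0:ℝ) else 1) *
          ((if k = l then (0:ℝ) else 1) * p^2
            + ((if i = k ∧ j = l then p - p^2 else 0) + (if j = k ∧ i = l then p - p^2 else 0))))
        = (if i = j then (0:ℝ) else 1) * (∑ l : Fin n,
          ((if k = l then (0:ℝ) else 1) * p^2
            + ((if i = k ∧ j = l then p - p^2 else 0) + (if j = k ∧ i = l then p - p^2 else 0)))) := by
      intro k; rw [Finset.mul_sum]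
    rw [Finset.sum_congr rfl fun k _ => pull k, ← Finset.mul_sum]
    congr 1
    rw [Finset.sum_congr rfl fun k _ => Finset.sum_add_distrib, Finset.sum_add_distrib,
      Finset.sum_congr rfl fun k _ => Finset.sum_add_distrib, Finset.sum_add_distrib]
    have e1 : (∑ k : Fin n, ∑ l : Fin n, (if k = l then (0:ℝ) else 1) * p^2)
        = ((n:ℝ)*((n:ℝ)-1)) * p^2 := by
      rw [Finset.sum_congr rfl fun k _ => (Finset.sum_mul univ _ (p^2)).symm,
        ← Finset.sum_mul, sum_chi2]
    rw [e1, sum_delta2, sum_delta2]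
    ring
  rw [Finset.sum_congr rfl fun i _ => Finset.sum_congr rfl fun j _ => step1 i j,
    Finset.sum_congr rfl fun i _ => (Finset.sum_mul univ _ _).symm, ← Finset.sum_mul, sum_chi2]
  ring

end AuxSums

section Aux

variable {Ω : Type*} [MeasureSpace Ω] [IsProbabilityMeasure (ℙ : Measure Ω)]
  {n : ℕ} {p : ℝ} {A : Fin n → Fin n → Ω → ℝ}

lemma aux_int1 (hmeas : ∀ i j, Measurable (A i j))
    (h01 : ∀ i j ω, A i j ω = 0 ∨ A i j ω = 1) (i j : Fin n) :
    Integrable (fun ω => A i j ω) ℙ := by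
  apply (integrable_const (1:ℝ)).mono' (hmeas i j).aestronglyMeasurable
  refine ae_of_all _ fun ω => ?_
  rcases h01 i j ω with h | h <;> simp [h]

lemma aux_int2 (hmeas : ∀ i j, Measurable (A i j))
    (h01 : ∀ i j ω, A i j ω = 0 ∨ A i j ω = 1) (i j k l : Fin n) :
    Integrable (fun ω => A i j ω * A k l ω) ℙ := by
  apply (integrable_const (1:ℝ)).mono' (((hmeas i j).mul (hmeas k l)).aestronglyMeasurable)
  refine ae_of_all _ fun ω => ?_
  rcases h01 i j ω with h | h <;> rcases h01 k l ω with h' | h' <;> simp [h, h']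

lemma aux_expA_lt (hp : p ∈ Set.Icc (0:ℝ) 1) (hmeas : ∀ i j, Measurable (A i j))
    (h01 : ∀ i j ω, A i j ω = 0 ∨ A i j ω = 1)
    (hBer : ∀ i j, i < j → ℙ {ω | A i j ω = 1} = ENNReal.ofReal p)
    {i j : Fin n} (h : i < j) :
    ∫ ω, A i j ω ∂ℙ = p := by
  have hs : MeasurableSet {ω | A i j ω = 1} := (hmeas i j) (measurableSet_singleton 1)
  have heq : (fun ω => A i j ω) = Set.indicator {ω | A i j ω = 1} (fun _ => (1:ℝ)) := by
    ext ω
    rcases h01 i j ω with h' | h' <;>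
      simp [h', Set.indicator_apply, Set.mem_setOf_eq]
  rw [heq, integral_indicator_const _ hs, measureReal_def, hBer i j h]
  simp [ENNReal.toReal_ofReal hp.1]

lemma aux_expA (hp : p ∈ Set.Icc (0:ℝ) 1) (hmeas : ∀ i j, Measurable (A i j))
    (hsymm : ∀ i j ω, A i j ω = A j i ω)
    (h01 : ∀ i j ω, A i j ω = 0 ∨ A i j ω = 1)
    (hBer : ∀ i j, i < j → ℙ {ω | A i j ω = 1} = ENNReal.ofReal p)
    {i j : Fin n} (h : i ≠ j) :
    ∫ ω, A i j ω ∂ℙ = p := by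
  rcases lt_or_gt_of_ne h with h' | h'
  · exact aux_expA_lt hp hmeas h01 hBer h'
  · have : (fun ω => A i j ω) = fun ω => A j i ω := by ext ω; exact hsymm i j ω
    rw [this]
    exact aux_expA_lt hp hmeas h01 hBer h'

/-- The single product-expectation formula. -/
lemma aux_expAA (hp : p ∈ Set.Icc (0:ℝ) 1) (hmeas : ∀ i j, Measurable (A i j))
    (hsymm : ∀ i j ω, A i j ω = A j i ω)
    (hdiag : ∀ i ω, A i i ω = 0)
    (h01 : ∀ i j ω, A i j ω = 0 ∨ A i j ω = 1)
    (hBer : ∀ i j, i < j → ℙ {ω | A i j ω = 1} = ENNReal.ofReal p)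
    (hindep : iIndepFun
      (fun (e : {q : Fin n × Fin n // q.1 < q.2}) ω => A e.val.1 e.val.2 ω) ℙ)
    (i j k l : Fin n) :
    ∫ ω, A i j ω * A k l ω ∂ℙ =
      if i = j ∨ k = l then 0
      else if (i = k ∧ j = l) ∨ (i = l ∧ j = k) then p else p^2 := by
  by_cases hij : i = j
  · subst hij
    simp [hdiag]
  by_cases hkl : k = l
  · subst hkl
    simp [hdiag, hij]
  rw [if_neg (by tauto)]
  by_cases hsame : (i = k ∧ j = l) ∨ (i = l ∧ j = k)
  · rw [if_pos hsame]
    have heq : ∀ ω, A k l ω = A i j ω := by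
      intro ω
      rcases hsame with ⟨h1, h2⟩ | ⟨h1, h2⟩
      · rw [h1, h2]
      · rw [h1, h2, hsymm]
    have : (fun ω => A i j ω * A k l ω) = fun ω => A i j ω := by
      ext ω
      rw [heq ω]
      rcases h01 i j ω with h' | h' <;> simp [h']
    rw [this]
    exact aux_expA hp hmeas hsymm h01 hBer hij
  · rw [if_neg hsame]
    obtain ⟨a, b, hab, hA1, hor1⟩ :
        ∃ a b : Fin n, a < b ∧ (∀ ω, A i j ω = A a b ω) ∧
          ((a = i ∧ b = j) ∨ (a = j ∧ b = i)) := by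
      rcases lt_or_gt_of_ne hij with h' | h'
      · exact ⟨i, j, h', fun _ => rfl, Or.inl ⟨rfl, rfl⟩⟩
      · exact ⟨j, i, h', fun ω => hsymm i j ω, Or.inr ⟨rfl, rfl⟩⟩
    obtain ⟨c, d, hcd, hA2, hor2⟩ :
        ∃ c d : Fin n, c < d ∧ (∀ ω, A k l ω = A c d ω) ∧
          ((c = k ∧ d = l) ∨ (c = l ∧ d = k)) := by
      rcases lt_or_gt_of_ne hkl with h' | h'
      · exact ⟨k, l, h', fun _ => rfl, Or.inl ⟨rfl, rfl⟩⟩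
      · exact ⟨l, k, h', fun ω => hsymm k l ω, Or.inr ⟨rfl, rfl⟩⟩
    have hne : (⟨(a, b), hab⟩ : {q : Fin n × Fin n // q.1 < q.2}) ≠ ⟨(c, d), hcd⟩ := by
      intro hcontra
      have h1 : a = c := congrArg (fun x => x.val.1) hcontra
      have h2 : b = d := congrArg (fun x => x.val.2) hcontra
      rcases hor1 with ⟨e1, e2⟩ | ⟨e1, e2⟩ <;> rcases hor2 with ⟨e3, e4⟩ | ⟨e3, e4⟩ <;>
        · apply hsame
          subst e1; subst e2; subst e3; subst e4
          tauto
    have hIndep : IndepFun (fun ω => A a b ω) (fun ω => A c d ω) ℙ :=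
      hindep.indepFun hne
    have : (fun ω => A i j ω * A k l ω) = fun ω => A a b ω * A c d ω := by
      ext ω; rw [hA1 ω, hA2 ω]
    rw [this]
    have := hIndep.integral_mul_eq_mul_integral (aux_int1 hmeas h01 a b).aestronglyMeasurable
      (aux_int1 hmeas h01 c d).aestronglyMeasurable
    rw [show (fun ω => A a b ω * A c d ω) = (fun ω => A a b ω) * (fun ω => A c d ω) from rfl,
      this, aux_expA_lt hp hmeas h01 hBer hab, aux_expA_lt hp hmeas h01 hBer hcd]
    ring

end Aux

/-- In the Erdős–Rényi model `G(n,p)`, the expected degree variance satisfies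
`E[V_n] = n⁻¹ (n-1)(n-2) p (1-p)`, where `V_n = n⁻¹ Σ_i (D_i - D̄_n)²`,
`D_i` is the degree of vertex `i` and `D̄_n` is the average degree. -/
theorem stmt_7 {Ω : Type*} [MeasureSpace Ω] [IsProbabilityMeasure (ℙ : Measure Ω)]
    (n : ℕ) (hn : 2 ≤ n) (p : ℝ) (hp : p ∈ Set.Icc (0 : ℝ) 1)
    (A : Fin n → Fin n → Ω → ℝ)
    (hmeas : ∀ i j, Measurable (A i j))
    (hsymm : ∀ i j ω, A i j ω = A j i ω)
    (hdiag : ∀ i ω, A i i ω = 0)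
    (h01 : ∀ i j ω, A i j ω = 0 ∨ A i j ω = 1)
    (hBer : ∀ i j, i < j → ℙ {ω | A i j ω = 1} = ENNReal.ofReal p)
    (hindep : iIndepFun
      (fun (e : {q : Fin n × Fin n // q.1 < q.2}) ω => A e.val.1 e.val.2 ω) ℙ) :
    ∫ ω, (n : ℝ)⁻¹ * ∑ i : Fin n,
        ((∑ j : Fin n, A i j ω) - (n : ℝ)⁻¹ * ∑ k : Fin n, ∑ j : Fin n, A k j ω)^2 ∂ℙ
      = (n : ℝ)⁻¹ * (n - 1) * (n - 2) * (p * (1 - p)) := by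
  have hn0 : (n:ℝ) ≠ 0 := Nat.cast_ne_zero.mpr (by omega)
  -- pointwise algebraic identity
  have hpt : ∀ ω : Ω, (n : ℝ)⁻¹ * ∑ i : Fin n,
        ((∑ j : Fin n, A i j ω) - (n : ℝ)⁻¹ * ∑ k : Fin n, ∑ j : Fin n, A k j ω)^2
      = (n:ℝ)⁻¹ * (∑ i : Fin n, ∑ j : Fin n, ∑ k : Fin n, A i j ω * A i k ω)
        - ((n:ℝ)⁻¹)^2 *
          (∑ i : Fin n, ∑ j : Fin n, ∑ k : Fin n, ∑ l : Fin n, A i j ω * A k l ω) := by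
    intro ω
    have hTT : (∑ k : Fin n, ∑ j : Fin n, A k j ω) * (∑ k : Fin n, ∑ j : Fin n, A k j ω)
        = ∑ i : Fin n, ∑ j : Fin n, ∑ k : Fin n, ∑ l : Fin n, A i j ω * A k l ω := by
      rw [Finset.sum_mul]
      refine Finset.sum_congr rfl fun i _ => ?_
      rw [Finset.sum_mul]
      refine Finset.sum_congr rfl fun j _ => ?_
      rw [Finset.mul_sum]
      refine Finset.sum_congr rfl fun k _ => ?_
      rw [Finset.mul_sum]
    have hexp : ∑ i : Fin n,
        ((∑ j : Fin n, A i j ω) - (n : ℝ)⁻¹ * ∑ k : Fin n, ∑ j : Fin n, A k j ω)^2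
        = (∑ i : Fin n, (∑ j : Fin n, A i j ω) * (∑ j : Fin n, A i j ω))
          - (2 * (n:ℝ)⁻¹ * (∑ k : Fin n, ∑ j : Fin n, A k j ω)) *
              (∑ i : Fin n, ∑ j : Fin n, A i j ω)
          + (n:ℝ) * (((n:ℝ)⁻¹)^2 *
              ((∑ k : Fin n, ∑ j : Fin n, A k j ω) * (∑ k : Fin n, ∑ j : Fin n, A k j ω))) := by
      rw [Finset.sum_congr rfl (fun i _ => (by ring :
        ((∑ j : Fin n, A i j ω) - (n : ℝ)⁻¹ * ∑ k : Fin n, ∑ j : Fin n, A k j ω)^2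
          = (∑ j : Fin n, A i j ω) * (∑ j : Fin n, A i j ω)
            - (2 * (n:ℝ)⁻¹ * (∑ k : Fin n, ∑ j : Fin n, A k j ω)) * (∑ j : Fin n, A i j ω)
            + ((n:ℝ)⁻¹)^2 *
              ((∑ k : Fin n, ∑ j : Fin n, A k j ω) * (∑ k : Fin n, ∑ j : Fin n, A k j ω))))]
      rw [Finset.sum_add_distrib, Finset.sum_sub_distrib, ← Finset.mul_sum,
        Finset.sum_const, Finset.card_univ, Fintype.card_fin, nsmul_eq_mul]
    rw [hexp]
    rw [show (∑ i : Fin n, ∑ j : Fin n, A i j ω) = ∑ k : Fin n, ∑ j : Fin n, A k j ω from rfl]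
    rw [mul_assoc (2 * (n:ℝ)⁻¹), hTT]
    rw [Finset.sum_congr rfl (fun i (_ : i ∈ univ) => Finset.sum_mul_sum univ univ
      (fun j => A i j ω) (fun k => A i k ω))]
    field_simp
    ring
  rw [integral_congr_ae (ae_of_all _ hpt)]
  -- integrability
  have hInt2 : ∀ i j : Fin n, Integrable (fun ω => ∑ k : Fin n, A i j ω * A i k ω) ℙ :=
    fun i j => integrable_finset_sum _ (fun k _ => aux_int2 hmeas h01 i j i k)
  have hInt3 : ∀ i : Fin n,
      Integrable (fun ω => ∑ j : Fin n, ∑ k : Fin n, A i j ω * A i k ω) ℙ :=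
    fun i => integrable_finset_sum _ (fun j _ => hInt2 i j)
  have hF : Integrable (fun ω => ∑ i : Fin n, ∑ j : Fin n, ∑ k : Fin n,
      A i j ω * A i k ω) ℙ := integrable_finset_sum _ (fun i _ => hInt3 i)
  have hInt2' : ∀ i j k : Fin n,
      Integrable (fun ω => ∑ l : Fin n, A i j ω * A k l ω) ℙ :=
    fun i j k => integrable_finset_sum _ (fun l _ => aux_int2 hmeas h01 i j k l)
  have hInt3' : ∀ i j : Fin n,
      Integrable (fun ω => ∑ k : Fin n, ∑ l : Fin n, A i j ω * A k l ω) ℙ :=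
    fun i j => integrable_finset_sum _ (fun k _ => hInt2' i j k)
  have hInt4' : ∀ i : Fin n,
      Integrable (fun ω => ∑ j : Fin n, ∑ k : Fin n, ∑ l : Fin n, A i j ω * A k l ω) ℙ :=
    fun i => integrable_finset_sum _ (fun j _ => hInt3' i j)
  have hG : Integrable (fun ω => ∑ i : Fin n, ∑ j : Fin n, ∑ k : Fin n, ∑ l : Fin n,
      A i j ω * A k l ω) ℙ := integrable_finset_sum _ (fun i _ => hInt4' i)
  rw [integral_sub (hF.const_mul _) (hG.const_mul _), integral_const_mul, integral_const_mul]
  -- compute the two integrals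
  have hFval : ∫ ω, (∑ i : Fin n, ∑ j : Fin n, ∑ k : Fin n, A i j ω * A i k ω) ∂ℙ
      = (n:ℝ) * (((n:ℝ)-1)*((n:ℝ)-1)*p^2 + ((n:ℝ)-1)*(p - p^2)) := by
    rw [integral_finset_sum _ (fun i _ => hInt3 i)]
    have : ∀ i : Fin n, ∫ ω, (∑ j : Fin n, ∑ k : Fin n, A i j ω * A i k ω) ∂ℙ
        = ((n:ℝ)-1)*((n:ℝ)-1)*p^2 + ((n:ℝ)-1)*(p - p^2) := by
      intro i
      rw [integral_finset_sum _ (fun j _ => hInt2 i j)]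
      rw [Finset.sum_congr rfl (fun j _ =>
        integral_finset_sum _ (fun k (_ : k ∈ univ) => aux_int2 hmeas h01 i j i k))]
      rw [Finset.sum_congr rfl (fun j _ => Finset.sum_congr rfl (fun k _ =>
        aux_expAA hp hmeas hsymm hdiag h01 hBer hindep i j i k))]
      exact sum3 n p i
    rw [Finset.sum_congr rfl (fun i _ => this i), Finset.sum_const, Finset.card_univ,
      Fintype.card_fin, nsmul_eq_mul]
  have hGval : ∫ ω, (∑ i : Fin n, ∑ j : Fin n, ∑ k : Fin n, ∑ l : Fin n,
        A i j ω * A k l ω) ∂ℙ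
      = ((n:ℝ)*((n:ℝ)-1))^2 * p^2 + 2*((n:ℝ)*((n:ℝ)-1))*(p - p^2) := by
    rw [integral_finset_sum _ (fun i _ => hInt4' i)]
    rw [Finset.sum_congr rfl (fun i _ => integral_finset_sum _ (fun j _ => hInt3' i j))]
    rw [Finset.sum_congr rfl (fun i _ => Finset.sum_congr rfl (fun j _ =>
      integral_finset_sum _ (fun k _ => hInt2' i j k)))]
    rw [Finset.sum_congr rfl (fun i _ => Finset.sum_congr rfl (fun j _ =>
      Finset.sum_congr rfl (fun k _ =>
        integral_finset_sum _ (fun l (_ : l ∈ univ) => aux_int2 hmeas h01 i j k l))))]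
    rw [Finset.sum_congr rfl (fun i _ => Finset.sum_congr rfl (fun j _ =>
      Finset.sum_congr rfl (fun k _ => Finset.sum_congr rfl (fun l _ =>
        aux_expAA hp hmeas hsymm hdiag h01 hBer hindep i j k l))))]
    exact sum4 n p
  rw [hFval, hGval]
  have h2 : (2:ℝ) ≤ (n:ℝ) := by exact_mod_cast hn
  field_simp
  ring
end

section
/- Let V_n^{(B)} = (2(n-4)/n^2) Σ_{i<j<k}(Ã_ijÃ_ik + Ã_ijÃ_jk + Ã_ikÃ_jk) with Ã_ij = A_ij - p, A_ij i.i.d. Bernoulli(p). Then Var(V_n^{(B)}) = (2(n-1)(n-2)(n-4)^2/n^3)(p(1-p))^2. -/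
open MeasureTheory ProbabilityTheory Finset

-- triple index set
def Tri (n : ℕ) : Finset (Fin n × Fin n × Fin n) :=
  univ.filter (fun t => t.1 < t.2.1 ∧ t.2.1 < t.2.2)

-- edge pair map
def EP (n : ℕ) (a : (Fin n × Fin n × Fin n) × Fin 3) : (Fin n × Fin n) × (Fin n × Fin n) :=
  ![((a.1.1, a.1.2.1), (a.1.1, a.1.2.2)),
    ((a.1.1, a.1.2.1), (a.1.2.1, a.1.2.2)),
    ((a.1.1, a.1.2.2), (a.1.2.1, a.1.2.2))] a.2

lemma ep_sorted {n : ℕ} {a : (Fin n × Fin n × Fin n) × Fin 3} (ha : a ∈ Tri n ×ˢ univ) :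
    ((EP n a).1.1 < (EP n a).1.2 ∧ (EP n a).2.1 < (EP n a).2.2) ∧ (EP n a).1 ≠ (EP n a).2 := by
  obtain ⟨⟨i, j, k⟩, m⟩ := a
  simp only [Finset.mem_product, Tri, mem_filter, mem_univ, true_and, and_true] at ha
  fin_cases m <;> simp [EP, Prod.ext_iff] <;> omega

lemma ep_inj {n : ℕ} {a b : (Fin n × Fin n × Fin n) × Fin 3}
    (ha : a ∈ Tri n ×ˢ univ) (hb : b ∈ Tri n ×ˢ univ) (h : EP n a = EP n b) : a = b := by
  obtain ⟨⟨i, j, k⟩, m⟩ := a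
  obtain ⟨⟨i', j', k'⟩, m'⟩ := b
  simp only [Finset.mem_product, Tri, mem_filter, mem_univ, true_and, and_true] at ha hb
  fin_cases m <;> fin_cases m' <;>
    simp_all [EP, Prod.ext_iff] <;> omega

lemma ep_noswap {n : ℕ} {a b : (Fin n × Fin n × Fin n) × Fin 3}
    (ha : a ∈ Tri n ×ˢ univ) (hb : b ∈ Tri n ×ˢ univ) :
    ¬((EP n a).1 = (EP n b).2 ∧ (EP n a).2 = (EP n b).1) := by
  obtain ⟨⟨i, j, k⟩, m⟩ := a
  obtain ⟨⟨i', j', k'⟩, m'⟩ := b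
  simp only [Finset.mem_product, Tri, mem_filter, mem_univ, true_and, and_true] at ha hb
  fin_cases m <;> fin_cases m' <;>
    simp_all [EP, Prod.ext_iff] <;> omega

lemma sum_rewrite {n : ℕ} {M : Type*} [AddCommMonoid M] (f : Fin n → Fin n → Fin n → M) :
    (∑ i : Fin n, ∑ j ∈ univ.filter (fun j => i < j), ∑ k ∈ univ.filter (fun k => j < k), f i j k)
    = ∑ t ∈ Tri n, f t.1 t.2.1 t.2.2 := by
  rw [Tri, Finset.sum_filter, Fintype.sum_prod_type]
  refine Finset.sum_congr rfl fun i _ => ?_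
  rw [Fintype.sum_prod_type, Finset.sum_filter]
  refine Finset.sum_congr rfl fun j _ => ?_
  by_cases hij : i < j
  · simp only [hij, true_and, if_true]
    rw [Finset.sum_filter]
  · simp [hij]

lemma peel_lemma {Ω ι : Type*} [DecidableEq ι] [MeasureSpace Ω] [IsProbabilityMeasure (ℙ : Measure Ω)]
    (X : ι → Ω → ℝ) (hind : iIndepFun X ℙ)
    (hm : ∀ i, Measurable (X i))
    (e f g k : ι) (hef : e ≠ f) (heg : e ≠ g) (hek : e ≠ k) :
    ∫ ω, X e ω * (X f ω * X g ω * X k ω) ∂ℙ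
      = (∫ ω, X e ω ∂ℙ) * ∫ ω, X f ω * X g ω * X k ω ∂ℙ := by
  have hdisj : Disjoint ({e} : Finset ι) ({f, g, k} : Finset ι) := by
    simp [Finset.disjoint_left, hef, heg, hek]
  have hI := hind.indepFun_finset {e} {f, g, k} hdisj hm
  have hφ : Measurable (fun v : (({e} : Finset ι) → ℝ) => v ⟨e, Finset.mem_singleton_self e⟩) :=
    measurable_pi_apply _
  have hψ : Measurable (fun v : (({f, g, k} : Finset ι) → ℝ) =>
      v ⟨f, by simp⟩ * v ⟨g, by simp⟩ * v ⟨k, by simp⟩) :=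
    ((measurable_pi_apply (⟨f, by simp⟩ : ({f, g, k} : Finset ι))).mul
      (measurable_pi_apply (⟨g, by simp⟩ : ({f, g, k} : Finset ι)))).mul
      (measurable_pi_apply (⟨k, by simp⟩ : ({f, g, k} : Finset ι)))
  have hI2 : IndepFun (X e) (fun ω => X f ω * X g ω * X k ω) ℙ := hI.comp hφ hψ
  exact hI2.integral_fun_mul_eq_mul_integral (hm e).aestronglyMeasurable
    (((hm f).mul (hm g)).mul (hm k)).aestronglyMeasurable


lemma cast_choose_two' (n : ℕ) : ((n.choose 2 : ℕ) : ℝ) = n * (n - 1) / 2 := by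
  induction n with
  | zero => simp
  | succ m ih =>
    rw [Nat.choose_succ_succ]
    push_cast [ih, Nat.choose_one_right]
    ring

lemma cast_choose_three' (n : ℕ) : ((n.choose 3 : ℕ) : ℝ) = n * (n - 1) * (n - 2) / 6 := by
  induction n with
  | zero => simp
  | succ m ih =>
    rw [Nat.choose_succ_succ]
    push_cast [ih, cast_choose_two']
    ring

lemma card_triples (n : ℕ) :
    ((univ : Finset (Fin n × Fin n × Fin n)).filter
      (fun t => t.1 < t.2.1 ∧ t.2.1 < t.2.2)).card = n.choose 3 := by
  have hpc : (Finset.powersetCard 3 (univ : Finset (Fin n))).card = n.choose 3 := by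
    rw [Finset.card_powersetCard, Finset.card_univ, Fintype.card_fin]
  rw [← hpc]
  apply Finset.card_bij (fun t _ => ({t.1, t.2.1, t.2.2} : Finset (Fin n)))
  · rintro ⟨i, j, k⟩ ht
    simp only [mem_filter] at ht
    obtain ⟨-, hij, hjk⟩ := ht
    rw [Finset.mem_powersetCard]
    refine ⟨Finset.subset_univ _, ?_⟩
    rw [Finset.card_eq_three]
    refine ⟨i, j, k, by omega, by omega, by omega, rfl⟩
  · rintro ⟨i, j, k⟩ ht ⟨i', j', k'⟩ ht' h
    simp only [mem_filter] at ht ht'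
    obtain ⟨-, hij, hjk⟩ := ht
    obtain ⟨-, hij', hjk'⟩ := ht'
    have h1 : i' ∈ ({i, j, k} : Finset (Fin n)) := h ▸ (by simp)
    have h2 : j' ∈ ({i, j, k} : Finset (Fin n)) := h ▸ (by simp)
    have h3 : k' ∈ ({i, j, k} : Finset (Fin n)) := h ▸ (by simp)
    have g1 : i ∈ ({i', j', k'} : Finset (Fin n)) := h ▸ (by simp)
    simp only [Finset.mem_insert, Finset.mem_singleton] at h1 h2 h3 g1
    simp only [Prod.mk.injEq]
    rcases h1 with rfl|rfl|rfl <;> rcases h2 with rfl|rfl|rfl <;> rcases h3 with rfl|rfl|rfl <;>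
      first
        | (exact ⟨rfl, rfl, rfl⟩)
        | omega
        | (rcases g1 with rfl|rfl|rfl <;> omega)
  · intro s hs
    rw [Finset.mem_powersetCard] at hs
    obtain ⟨a, b, c, hab, hac, hbc, rfl⟩ := Finset.card_eq_three.mp hs.2
    have hset : ∀ x y z : Fin n, ({x,y,z} : Finset (Fin n)) = {a,b,c} →
        x < y → y < z → ∃ t : Fin n × Fin n × Fin n,
          ∃ _ : t ∈ (univ : Finset (Fin n × Fin n × Fin n)).filter
            (fun t => t.1 < t.2.1 ∧ t.2.1 < t.2.2),
          ({t.1, t.2.1, t.2.2} : Finset (Fin n)) = {a,b,c} := by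
      intro x y z hxyz hxy hyz
      exact ⟨(x, y, z), by simp [mem_filter, hxy, hyz], hxyz⟩
    rcases lt_trichotomy a b with h1|h1|h1 <;> rcases lt_trichotomy a c with h2|h2|h2 <;>
      rcases lt_trichotomy b c with h3|h3|h3 <;>
      first
        | omega
        | (exact hset a b c rfl h1 h3)
        | (exact hset a c b (by ext x; simp; tauto) h2 h3)
        | (exact hset b a c (by ext x; simp; tauto) h1 h2)
        | (exact hset b c a (by ext x; simp; tauto) h3 h2)
        | (exact hset c a b (by ext x; simp; tauto) h2 h1)
        | (exact hset c b a (by ext x; simp; tauto) h3 h1)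

lemma card_Tri (n : ℕ) : (Tri n).card = n.choose 3 := card_triples n

section body
variable {Ω : Type*} [MeasureSpace Ω] [IsProbabilityMeasure (ℙ : Measure Ω)]

theorem main_aux (n : ℕ) (p : ℝ) (hp : p ∈ Set.Icc (0 : ℝ) 1)
    (A : Fin n → Fin n → Ω → ℝ)
    (hmeas : ∀ i j, Measurable (A i j))
    (h01 : ∀ i j ω, A i j ω = 0 ∨ A i j ω = 1)
    (hBer : ∀ i j, i < j → ℙ {ω | A i j ω = 1} = ENNReal.ofReal p)
    (hindep : iIndepFun
      (fun (e : {q : Fin n × Fin n // q.1 < q.2}) ω => A e.val.1 e.val.2 ω) ℙ) :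
    variance (fun ω => ∑ i : Fin n, ∑ j ∈ univ.filter (fun j => i < j),
          ∑ k ∈ univ.filter (fun k => j < k),
            ((A i j ω - p) * (A i k ω - p) + (A i j ω - p) * (A j k ω - p)
              + (A i k ω - p) * (A j k ω - p))) ℙ
      = (((Tri n).card * 3 : ℕ) : ℝ) * (p * (1 - p))^2 := by
  have hp0 := hp.1
  have hp1 := hp.2
  -- basic integrability helper
  have hbd : ∀ (f : Ω → ℝ), Measurable f → (∀ ω, |f ω| ≤ 1) → Integrable f ℙ := by
    intro f hf hb
    exact (integrable_const (1:ℝ)).mono' hf.aestronglyMeasurable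
      (Filter.Eventually.of_forall (fun ω => by simpa using hb ω))
  have hXb : ∀ (i j : Fin n) ω, |A i j ω - p| ≤ 1 := by
    intro i j ω
    rcases h01 i j ω with h | h <;> rw [h, abs_le] <;> constructor <;> linarith
  have hAint : ∀ i j : Fin n, Integrable (A i j) ℙ := by
    intro i j
    refine hbd _ (hmeas i j) fun ω => ?_
    rcases h01 i j ω with h | h <;> rw [h] <;> norm_num
  have hIA : ∀ i j : Fin n, i < j → ∫ ω, A i j ω ∂ℙ = p := by
    intro i j hij
    have hset : MeasurableSet {ω | A i j ω = 1} := (hmeas i j) (measurableSet_singleton 1)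
    have heq : (fun ω => A i j ω) = fun ω => Set.indicator {ω | A i j ω = 1} (fun _ => (1:ℝ)) ω := by
      funext ω
      rcases h01 i j ω with h | h <;> simp [Set.indicator_apply, h]
    rw [heq, integral_indicator_const (1:ℝ) hset, measureReal_def, hBer i j hij, ENNReal.toReal_ofReal hp0,
      smul_eq_mul, mul_one]
  -- centered variables
  have hX : iIndepFun
      (fun (e : {q : Fin n × Fin n // q.1 < q.2}) ω => A e.val.1 e.val.2 ω - p) ℙ :=
    hindep.comp (fun _ x => x - p) (fun _ => measurable_id.sub measurable_const)
  have hXm : ∀ e : {q : Fin n × Fin n // q.1 < q.2},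
      Measurable (fun ω => A e.val.1 e.val.2 ω - p) :=
    fun e => (hmeas _ _).sub measurable_const
  have hm1 : ∀ e : {q : Fin n × Fin n // q.1 < q.2},
      ∫ ω, (A e.val.1 e.val.2 ω - p) ∂ℙ = 0 := by
    intro e
    rw [integral_sub (hAint _ _) (integrable_const p), hIA _ _ e.prop, integral_const]
    simp
  have hm2 : ∀ e : {q : Fin n × Fin n // q.1 < q.2},
      ∫ ω, (A e.val.1 e.val.2 ω - p)^2 ∂ℙ = p * (1 - p) := by
    intro e
    have heq : (fun ω => (A e.val.1 e.val.2 ω - p)^2)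
        = fun ω => (1 - 2*p) * A e.val.1 e.val.2 ω + p^2 := by
      funext ω
      rcases h01 e.val.1 e.val.2 ω with h | h <;> rw [h] <;> ring
    rw [heq, integral_add ((hAint _ _).const_mul _) (integrable_const _),
      integral_const_mul, hIA _ _ e.prop, integral_const]
    simp
    ring
  -- pair moments
  have pair0 : ∀ e f : {q : Fin n × Fin n // q.1 < q.2}, e ≠ f →
      ∫ ω, (A e.val.1 e.val.2 ω - p) * (A f.val.1 f.val.2 ω - p) ∂ℙ = 0 := by
    intro e f hef
    have h := (hX.indepFun hef).integral_mul_eq_mul_integral (hXm e).aestronglyMeasurable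
      (hXm f).aestronglyMeasurable
    simpa [hm1 e, hm1 f] using h
  have pairsq : ∀ e f : {q : Fin n × Fin n // q.1 < q.2}, e ≠ f →
      ∫ ω, ((A e.val.1 e.val.2 ω - p) * (A f.val.1 f.val.2 ω - p))^2 ∂ℙ = (p * (1 - p))^2 := by
    intro e f hef
    have hI : IndepFun (fun ω => (A e.val.1 e.val.2 ω - p)^2)
        (fun ω => (A f.val.1 f.val.2 ω - p)^2) ℙ :=
      (hX.indepFun hef).comp (measurable_id.pow_const 2) (measurable_id.pow_const 2)
    have h := hI.integral_mul_eq_mul_integral ((hXm e).pow_const 2).aestronglyMeasurable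
      ((hXm f).pow_const 2).aestronglyMeasurable
    have heq : (fun ω => ((A e.val.1 e.val.2 ω - p) * (A f.val.1 f.val.2 ω - p))^2)
        = fun ω => (A e.val.1 e.val.2 ω - p)^2 * (A f.val.1 f.val.2 ω - p)^2 := by
      funext ω; ring
    rw [heq]
    calc ∫ ω, (A e.val.1 e.val.2 ω - p)^2 * (A f.val.1 f.val.2 ω - p)^2 ∂ℙ
        = (∫ ω, (A e.val.1 e.val.2 ω - p)^2 ∂ℙ) * ∫ ω, (A f.val.1 f.val.2 ω - p)^2 ∂ℙ := by
          simpa using h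
      _ = (p * (1-p))^2 := by rw [hm2 e, hm2 f]; ring
  -- index set and summands
  set I : Finset ((Fin n × Fin n × Fin n) × Fin 3) := Tri n ×ˢ univ with hIdef
  set Y : ((Fin n × Fin n × Fin n) × Fin 3) → Ω → ℝ :=
    fun a ω => (A (EP n a).1.1 (EP n a).1.2 ω - p) * (A (EP n a).2.1 (EP n a).2.2 ω - p)
    with hYdef
  have hYm : ∀ a, Measurable (Y a) :=
    fun a => ((hmeas _ _).sub measurable_const).mul ((hmeas _ _).sub measurable_const)
  have hYb : ∀ a ω, |Y a ω| ≤ 1 := by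
    intro a ω
    rw [hYdef, abs_mul]
    exact mul_le_one₀ (hXb _ _ ω) (abs_nonneg _) (hXb _ _ ω)
  have hYint : ∀ a, Integrable (Y a) ℙ := fun a => hbd _ (hYm a) (hYb a)
  have hYYint : ∀ a b, Integrable (fun ω => Y a ω * Y b ω) ℙ := by
    intro a b
    refine hbd _ ((hYm a).mul (hYm b)) fun ω => ?_
    rw [abs_mul]
    exact mul_le_one₀ (hYb a ω) (abs_nonneg _) (hYb b ω)
  -- expectation of individual terms
  have Epair0 : ∀ a ∈ I, ∫ ω, Y a ω ∂ℙ = 0 := by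
    intro a ha
    have hs := ep_sorted (hIdef ▸ ha)
    exact pair0 ⟨(EP n a).1, hs.1.1⟩ ⟨(EP n a).2, hs.1.2⟩
      (fun h => hs.2 (Subtype.ext_iff.mp h))
  have Ediag : ∀ a ∈ I, ∫ ω, Y a ω * Y a ω ∂ℙ = (p * (1 - p))^2 := by
    intro a ha
    have hs := ep_sorted (hIdef ▸ ha)
    have heq : (fun ω => Y a ω * Y a ω)
        = fun ω => ((A (EP n a).1.1 (EP n a).1.2 ω - p) * (A (EP n a).2.1 (EP n a).2.2 ω - p))^2 := by
      funext ω; rw [hYdef]; ring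
    rw [heq]
    exact pairsq ⟨(EP n a).1, hs.1.1⟩ ⟨(EP n a).2, hs.1.2⟩
      (fun h => hs.2 (Subtype.ext_iff.mp h))
  have Ecross : ∀ a ∈ I, ∀ b ∈ I, a ≠ b → ∫ ω, Y a ω * Y b ω ∂ℙ = 0 := by
    intro a ha b hb hab
    have hsa := ep_sorted (hIdef ▸ ha)
    have hsb := ep_sorted (hIdef ▸ hb)
    set e : {q : Fin n × Fin n // q.1 < q.2} := ⟨(EP n a).1, hsa.1.1⟩ with he
    set f : {q : Fin n × Fin n // q.1 < q.2} := ⟨(EP n a).2, hsa.1.2⟩ with hf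
    set g : {q : Fin n × Fin n // q.1 < q.2} := ⟨(EP n b).1, hsb.1.1⟩ with hg
    set k : {q : Fin n × Fin n // q.1 < q.2} := ⟨(EP n b).2, hsb.1.2⟩ with hk
    have hef : e ≠ f := fun h => hsa.2 (Subtype.ext_iff.mp h)
    have hgk : g ≠ k := fun h => hsb.2 (Subtype.ext_iff.mp h)
    have hinj : ¬(e.val = g.val ∧ f.val = k.val) := by
      rintro ⟨h1, h2⟩
      exact hab (ep_inj (hIdef ▸ ha) (hIdef ▸ hb) (Prod.ext h1 h2))
    have hswap : ¬(e.val = k.val ∧ f.val = g.val) := by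
      rintro ⟨h1, h2⟩
      exact ep_noswap (hIdef ▸ ha) (hIdef ▸ hb) ⟨h1, h2⟩
    have key : ∀ u v w z : {q : Fin n × Fin n // q.1 < q.2}, u ≠ v → u ≠ w → u ≠ z →
        ∫ ω, (A u.val.1 u.val.2 ω - p) * ((A v.val.1 v.val.2 ω - p) *
          (A w.val.1 w.val.2 ω - p) * (A z.val.1 z.val.2 ω - p)) ∂ℙ = 0 := by
      intro u v w z h1 h2 h3
      rw [peel_lemma _ hX hXm u v w z h1 h2 h3, hm1 u, zero_mul]
    by_cases heg : e = g
    · have hfe : f ≠ e := fun h => hef h.symm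
      have hfg : f ≠ g := fun h => hef (h.trans heg.symm).symm
      have hfk : f ≠ k := fun h =>
        hinj ⟨Subtype.ext_iff.mp heg, Subtype.ext_iff.mp h⟩
      have heq : (fun ω => Y a ω * Y b ω)
          = fun ω => (A f.val.1 f.val.2 ω - p) * ((A e.val.1 e.val.2 ω - p) *
            (A g.val.1 g.val.2 ω - p) * (A k.val.1 k.val.2 ω - p)) := by
        funext ω; rw [hYdef]; ring
      rw [heq]
      exact key f e g k hfe hfg hfk
    · by_cases hek : e = k
      · have hge : g ≠ e := fun h => heg h.symm
        have hgf : g ≠ f := fun h =>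
          hswap ⟨Subtype.ext_iff.mp hek, Subtype.ext_iff.mp h.symm⟩
        have hgk' : g ≠ k := fun h => heg (hek.trans h.symm)
        have heq : (fun ω => Y a ω * Y b ω)
            = fun ω => (A g.val.1 g.val.2 ω - p) * ((A e.val.1 e.val.2 ω - p) *
              (A f.val.1 f.val.2 ω - p) * (A k.val.1 k.val.2 ω - p)) := by
          funext ω; rw [hYdef]; ring
        rw [heq]
        exact key g e f k hge hgf hgk'
      · have heq : (fun ω => Y a ω * Y b ω)
            = fun ω => (A e.val.1 e.val.2 ω - p) * ((A f.val.1 f.val.2 ω - p) *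
              (A g.val.1 g.val.2 ω - p) * (A k.val.1 k.val.2 ω - p)) := by
          funext ω; rw [hYdef]; ring
        rw [heq]
        exact key e f g k hef heg hek
  -- rewrite the statistic as a single sum
  have hSrw : (fun ω => ∑ i : Fin n, ∑ j ∈ univ.filter (fun j => i < j),
          ∑ k ∈ univ.filter (fun k => j < k),
            ((A i j ω - p) * (A i k ω - p) + (A i j ω - p) * (A j k ω - p)
              + (A i k ω - p) * (A j k ω - p)))
      = fun ω => ∑ a ∈ I, Y a ω := by
    funext ω
    rw [sum_rewrite, hIdef, Finset.sum_product]
    refine Finset.sum_congr rfl fun t _ => ?_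
    rw [Fin.sum_univ_three]
    simp only [hYdef, EP, Matrix.cons_val_zero, Matrix.cons_val_one, Matrix.head_cons,
      Matrix.cons_val_two, Matrix.tail_cons]
  rw [hSrw]
  --由 variance
  have hSmeas : Measurable (fun ω => ∑ a ∈ I, Y a ω) :=
    Finset.measurable_sum I (fun a _ => hYm a)
  have hS2 : MemLp (fun ω => ∑ a ∈ I, Y a ω) 2 ℙ := by
    refine MemLp.of_bound hSmeas.aestronglyMeasurable (I.card : ℝ)
      (Filter.Eventually.of_forall fun ω => ?_)
    rw [Real.norm_eq_abs]
    calc |∑ a ∈ I, Y a ω| ≤ ∑ a ∈ I, |Y a ω| := Finset.abs_sum_le_sum_abs _ _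
      _ ≤ ∑ a ∈ I, 1 := Finset.sum_le_sum fun a _ => hYb a ω
      _ = (I.card : ℝ) := by simp
  rw [variance_eq_sub hS2]
  have hES : ∫ ω, ∑ a ∈ I, Y a ω ∂ℙ = 0 := by
    rw [integral_finset_sum I (fun a _ => hYint a)]
    exact Finset.sum_eq_zero Epair0
  have hES2 : ∫ ω, ((fun ω => ∑ a ∈ I, Y a ω)^2) ω ∂ℙ = (I.card : ℝ) * (p * (1 - p))^2 := by
    have hsq : (fun ω => ((fun ω => ∑ a ∈ I, Y a ω)^2) ω)
        = fun ω => ∑ a ∈ I, ∑ b ∈ I, Y a ω * Y b ω := by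
      funext ω
      simp only [Pi.pow_apply]
      rw [sq, Finset.sum_mul_sum]
    rw [hsq, integral_finset_sum I (fun a _ => integrable_finset_sum I (fun b _ => hYYint a b))]
    have hrow : ∀ a ∈ I, ∫ ω, ∑ b ∈ I, Y a ω * Y b ω ∂ℙ = (p * (1 - p))^2 := by
      intro a ha
      rw [integral_finset_sum I (fun b _ => hYYint a b),
        Finset.sum_eq_single_of_mem a ha (fun b hb hba => Ecross a ha b hb (fun h => hba h.symm))]
      exact Ediag a ha
    rw [Finset.sum_congr rfl hrow, Finset.sum_const, nsmul_eq_mul]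
  rw [hES2, hES]
  have hcard : I.card = (Tri n).card * 3 := by
    rw [hIdef, Finset.card_product, Finset.card_univ, Fintype.card_fin]
  rw [hcard]
  push_cast
  ring

end body

/-- Let `V_n^{(B)} = (2(n-4)/n²) Σ_{i<j<k}(Ã_ij Ã_ik + Ã_ij Ã_jk + Ã_ik Ã_jk)` with
`Ã_ij = A_ij - p` and `A_ij` i.i.d. Bernoulli(p). Then
`Var(V_n^{(B)}) = (2(n-1)(n-2)(n-4)²/n³)(p(1-p))²`. -/
theorem stmt_11 {Ω : Type*} [MeasureSpace Ω] [IsProbabilityMeasure (ℙ : Measure Ω)]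
    (n : ℕ) (p : ℝ) (hp : p ∈ Set.Icc (0 : ℝ) 1)
    (A : Fin n → Fin n → Ω → ℝ)
    (hmeas : ∀ i j, Measurable (A i j))
    (h01 : ∀ i j ω, A i j ω = 0 ∨ A i j ω = 1)
    (hBer : ∀ i j, i < j → ℙ {ω | A i j ω = 1} = ENNReal.ofReal p)
    (hindep : iIndepFun
      (fun (e : {q : Fin n × Fin n // q.1 < q.2}) ω => A e.val.1 e.val.2 ω) ℙ) :
    variance (fun ω => (2 * ((n : ℝ) - 4) / (n : ℝ)^2) *
        ∑ i : Fin n, ∑ j ∈ univ.filter (fun j => i < j),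
          ∑ k ∈ univ.filter (fun k => j < k),
            ((A i j ω - p) * (A i k ω - p) + (A i j ω - p) * (A j k ω - p)
              + (A i k ω - p) * (A j k ω - p))) ℙ
      = (2 * (n - 1) * (n - 2) * (n - 4)^2 / (n : ℝ)^3) * (p * (1 - p))^2 := by
  rw [variance_const_mul, main_aux n p hp A hmeas h01 hBer hindep, card_Tri]
  by_cases hn : (n : ℝ) = 0
  · have hn0 : n = 0 := Nat.cast_eq_zero.mp hn
    subst hn0
    norm_num
  · rw [Nat.cast_mul, cast_choose_three']
    push_cast
    field_simp
    ring
end
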